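/- For any hypergraph H on [n], the multivariate relaxed matching polynomial η_H(x) = ∑_M (-1)^{|M|} W(M) ∏_{i ∉ V(M)} x_i, where M ranges over relaxed matchings of H and W(M) = ∏_k k^{m_{k+1}(M)}, is stable; in particular the univariate polynomial η_H(x) = ∑_M (-1)^{|M|} W(M) x^{n - |V(M)|} is real-rooted. -/

import Mathlib

open MvPolynomial Finset
open scoped Classical

/-- A polynomial is stable if it does not vanish when all variables lie in the
open upper half-plane (the zero polynomial is stable by convention). -/
def IsStable {n : ℕ} (f : MvPolynomial (Fin n) ℂ) : Prop :=
  f = 0 ∨ ∀ x : Fin n → ℂ, (∀ i, 0 < (x i).im) → MvPolynomial.eval x f ≠ 0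

variable {n m : ℕ}

/-- A hypergraph `H` on `[n]` has edges `edge e ⊆ [n]` indexed by `e : Fin m`.
A relaxed matching `M = (S_e)` of `H` is encoded by `s : Fin m → Finset (Fin n)`:
`s e` is the subset chosen from the edge `e` (empty meaning `e` is unused), the
chosen subsets have more than one element and are pairwise disjoint. -/
def IsRelaxedMatching (edge : Fin m → Finset (Fin n)) (s : Fin m → Finset (Fin n)) :
    Prop :=
  (∀ e, s e ⊆ edge e ∧ (s e = ∅ ∨ 1 < (s e).card)) ∧
    ∀ e f, e ≠ f → Disjoint (s e) (s f)

/-- `|M|`: the number of edges used by the relaxed matching. -/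
noncomputable def rmSize (s : Fin m → Finset (Fin n)) : ℕ :=
  (Finset.univ.filter fun e : Fin m => s e ≠ ∅).card

/-- `V(M) = ⋃_e S_e`. -/
noncomputable def rmVerts (s : Fin m → Finset (Fin n)) : Finset (Fin n) :=
  Finset.univ.filter fun i => ∃ e, i ∈ s e

/-- `m_k(M)`: the number of chosen subsets of size `k`. -/
noncomputable def rmCount (s : Fin m → Finset (Fin n)) (k : ℕ) : ℕ :=
  (Finset.univ.filter fun e : Fin m => (s e).card = k).card

/-- The weight `W(M) = ∏_{k=1}^{n-1} k^{m_{k+1}(M)}`. -/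
noncomputable def rmWeight (s : Fin m → Finset (Fin n)) : ℕ :=
  ∏ k ∈ Finset.Icc 1 (n - 1), k ^ rmCount s (k + 1)

/-- The multivariate relaxed matching polynomial
`η_H(x) = ∑_M (-1)^{|M|} W(M) ∏_{i ∉ V(M)} x_i`. -/
noncomputable def relaxedMatchPoly (edge : Fin m → Finset (Fin n)) :
    MvPolynomial (Fin n) ℂ :=
  ∑ s ∈ Finset.univ.filter (fun s => IsRelaxedMatching edge s),
    (-1 : MvPolynomial (Fin n) ℂ) ^ rmSize s * C (rmWeight s : ℂ) *
      ∏ i ∈ Finset.univ \ rmVerts s, X i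

/-- The univariate relaxed matching polynomial
`η_H(x) = ∑_M (-1)^{|M|} W(M) x^{n - |V(M)|}`. -/
noncomputable def relaxedMatchPolyUni (edge : Fin m → Finset (Fin n)) : Polynomial ℝ :=
  ∑ s ∈ Finset.univ.filter (fun s => IsRelaxedMatching edge s),
    ((-1 : ℝ) ^ rmSize s * (rmWeight s : ℝ)) •
      (Polynomial.X : Polynomial ℝ) ^ (n - (rmVerts s).card)

/-! ### Auxiliary development -/

/-- The relaxed matching polynomial with an explicit list of edges (indexed by `Fin m`)
and an explicit "active" vertex set `A`, defined by the edge-by-edge recursion. -/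
noncomputable def etaAux : (m : ℕ) → (Fin m → Finset (Fin n)) → Finset (Fin n) →
    MvPolynomial (Fin n) ℂ
  | 0, _, A => ∏ j ∈ A, X j
  | m + 1, edge, A =>
      ∑ S ∈ (edge 0 ∩ A).powerset,
        C (1 - (S.card : ℂ)) * etaAux m (fun i => edge i.succ) (A \ S)

lemma etaAux_zero (edge : Fin 0 → Finset (Fin n)) (A : Finset (Fin n)) :
    etaAux 0 edge A = ∏ j ∈ A, X j := rfl

lemma etaAux_succ (edge : Fin (m + 1) → Finset (Fin n)) (A : Finset (Fin n)) :
    etaAux (m + 1) edge A =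
      ∑ S ∈ (edge 0 ∩ A).powerset,
        C (1 - (S.card : ℂ)) * etaAux m (fun i => edge i.succ) (A \ S) := rfl

/-- `etaAux` only depends on the variables in `A`. -/
lemma etaAux_eval_congr : ∀ (m : ℕ) (edge : Fin m → Finset (Fin n)) (A : Finset (Fin n))
    (x y : Fin n → ℂ), (∀ j ∈ A, x j = y j) →
    eval x (etaAux m edge A) = eval y (etaAux m edge A) := by
  intro m
  induction m with
  | zero =>
    intro edge A x y h
    simp only [etaAux, map_prod, eval_X]
    exact Finset.prod_congr rfl h
  | succ m ih =>
    intro edge A x y h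
    simp only [etaAux, map_sum, map_mul, eval_C]
    refine Finset.sum_congr rfl fun S hS => ?_
    rw [ih _ _ x y fun j hj => h j (Finset.sdiff_subset hj)]

/-- double-sum exchange over disjoint pairs of subsets. -/
lemma powerset_sum_comm {α M : Type*} [AddCommMonoid M] [DecidableEq α]
    (P Q : Finset α) (F : Finset α → Finset α → M) :
    ∑ T ∈ P.powerset, ∑ S ∈ (Q \ T).powerset, F T S =
      ∑ S ∈ Q.powerset, ∑ T ∈ (P \ S).powerset, F T S := by
  have h1 : ∀ T, (Q \ T).powerset = Q.powerset.filter (fun S => Disjoint S T) := by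
    intro T; ext S
    simp [Finset.mem_powerset, Finset.subset_sdiff]
  have h2 : ∀ S, (P \ S).powerset = P.powerset.filter (fun T => Disjoint T S) := by
    intro S; ext T
    simp [Finset.mem_powerset, Finset.subset_sdiff]
  calc ∑ T ∈ P.powerset, ∑ S ∈ (Q \ T).powerset, F T S
      = ∑ T ∈ P.powerset, ∑ S ∈ Q.powerset, if Disjoint S T then F T S else 0 := by
        refine Finset.sum_congr rfl fun T _ => ?_
        rw [h1 T, Finset.sum_filter]
    _ = ∑ S ∈ Q.powerset, ∑ T ∈ P.powerset, if Disjoint S T then F T S else 0 :=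
        Finset.sum_comm
    _ = ∑ S ∈ Q.powerset, ∑ T ∈ (P \ S).powerset, F T S := by
        refine Finset.sum_congr rfl fun S _ => ?_
        rw [h2 S, Finset.sum_filter]
        refine Finset.sum_congr rfl fun T _ => ?_
        by_cases hd : Disjoint S T
        · rw [if_pos hd, if_pos (disjoint_comm.mp hd)]
        · rw [if_neg hd, if_neg fun hc => hd (disjoint_comm.mp hc)]

/-- The shift identity. -/
lemma etaAux_shift : ∀ (m : ℕ) (edge : Fin m → Finset (Fin n))
    (A G : Finset (Fin n)), G ⊆ A → ∀ (x : Fin n → ℂ) (t : ℂ),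
    ∑ T ∈ G.powerset, t ^ T.card * eval x (etaAux m edge (A \ T)) =
      eval (fun j => x j + if j ∈ G then t else 0) (etaAux m edge A) := by
  intro m
  induction m with
  | zero =>
    intro edge A G hGA x t
    simp only [etaAux, map_prod, eval_X]
    have hsplit : ∀ T ∈ G.powerset, ∏ j ∈ A \ T, x j =
        (∏ j ∈ G \ T, x j) * ∏ j ∈ A \ G, x j := by
      intro T hT
      rw [Finset.mem_powerset] at hT
      rw [← Finset.prod_union]
      · apply Finset.prod_congr _ fun _ _ => rfl
        ext j
        simp only [Finset.mem_sdiff, Finset.mem_union]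
        constructor
        · intro ⟨hjA, hjT⟩
          by_cases hjG : j ∈ G
          · exact Or.inl ⟨hjG, hjT⟩
          · exact Or.inr ⟨hjA, hjG⟩
        · rintro (⟨hjG, hjT⟩ | ⟨hjA, hjG⟩)
          · exact ⟨hGA hjG, hjT⟩
          · exact ⟨hjA, fun hj2 => hjG (hT hj2)⟩
      · exact Finset.disjoint_left.mpr fun j hj hj2 => (Finset.mem_sdiff.mp hj2).2
          (Finset.mem_sdiff.mp hj).1
    rw [Finset.sum_congr rfl fun T hT => by rw [hsplit T hT]]
    have hprodA : ∏ j ∈ A, (x j + if j ∈ G then t else 0) =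
        (∏ j ∈ G, (t + x j)) * ∏ j ∈ A \ G, x j := by
      rw [← Finset.prod_sdiff hGA]
      rw [mul_comm]
      congr 1
      · exact Finset.prod_congr rfl fun j hj => by rw [if_pos hj, add_comm]
      · exact Finset.prod_congr rfl fun j hj => by
          rw [if_neg (Finset.mem_sdiff.mp hj).2, add_zero]
    rw [hprodA, Finset.prod_add (fun _ => t) x G]
    rw [Finset.sum_mul]
    refine Finset.sum_congr rfl fun T hT => ?_
    rw [Finset.prod_const]
    ring
  | succ m ih =>
    intro edge A G hGA x t
    have hG0 : ∀ T : Finset (Fin n), edge 0 ∩ (A \ T) = (edge 0 ∩ A) \ T := by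
      intro T; ext j; simp only [Finset.mem_inter, Finset.mem_sdiff]; tauto
    simp only [etaAux, map_sum, map_mul, eval_C]
    calc ∑ T ∈ G.powerset, t ^ T.card * ∑ S ∈ (edge 0 ∩ (A \ T)).powerset,
            (1 - (S.card : ℂ)) * eval x (etaAux m (fun i => edge i.succ) ((A \ T) \ S))
        = ∑ T ∈ G.powerset, ∑ S ∈ ((edge 0 ∩ A) \ T).powerset,
            t ^ T.card * ((1 - (S.card : ℂ)) *
              eval x (etaAux m (fun i => edge i.succ) ((A \ T) \ S))) := by
          refine Finset.sum_congr rfl fun T _ => ?_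
          rw [hG0 T, Finset.mul_sum]
      _ = ∑ S ∈ (edge 0 ∩ A).powerset, ∑ T ∈ (G \ S).powerset,
            t ^ T.card * ((1 - (S.card : ℂ)) *
              eval x (etaAux m (fun i => edge i.succ) ((A \ T) \ S))) :=
          powerset_sum_comm G (edge 0 ∩ A) _
      _ = ∑ S ∈ (edge 0 ∩ A).powerset, (1 - (S.card : ℂ)) *
            eval (fun j => x j + if j ∈ G then t else 0)
              (etaAux m (fun i => edge i.succ) (A \ S)) := by
          refine Finset.sum_congr rfl fun S hS => ?_
          rw [Finset.mem_powerset] at hS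
          have hGS : G \ S ⊆ A \ S := Finset.sdiff_subset_sdiff hGA (le_refl S)
          have hcong : eval (fun j => x j + if j ∈ G then t else 0)
              (etaAux m (fun i => edge i.succ) (A \ S)) =
              eval (fun j => x j + if j ∈ G \ S then t else 0)
                (etaAux m (fun i => edge i.succ) (A \ S)) := by
            apply etaAux_eval_congr
            intro j hj
            have hjS : j ∉ S := (Finset.mem_sdiff.mp hj).2
            by_cases hjG : j ∈ G
            · rw [if_pos hjG, if_pos (Finset.mem_sdiff.mpr ⟨hjG, hjS⟩)]
            · rw [if_neg hjG, if_neg fun hc => hjG (Finset.mem_sdiff.mp hc).1]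
          rw [hcong, ← ih (fun i => edge i.succ) (A \ S) (G \ S) hGS x t,
            Finset.mul_sum]
          refine Finset.sum_congr rfl fun T hT => ?_
          have hsw : (A \ T) \ S = (A \ S) \ T := by
            ext j
            simp only [Finset.mem_sdiff]
            tauto
          rw [hsw]
          ring

/-- Log-derivative of a product of upper-half-plane-rootless linear factors at `1`. -/
lemma prod_ratio_aux (M : Multiset ℂ) (hM : ∀ r ∈ M, r.im < 0) :
    Polynomial.eval 1 (M.map fun a => Polynomial.X - Polynomial.C a).prod ≠ 0 ∧
      (Polynomial.eval 1 (Polynomial.derivative (M.map fun a =>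
          Polynomial.X - Polynomial.C a).prod) /
        Polynomial.eval 1 (M.map fun a => Polynomial.X - Polynomial.C a).prod = 0 ∨
       (Polynomial.eval 1 (Polynomial.derivative (M.map fun a =>
          Polynomial.X - Polynomial.C a).prod) /
        Polynomial.eval 1 (M.map fun a => Polynomial.X - Polynomial.C a).prod).im < 0) := by
  induction M using Multiset.induction_on with
  | empty => simp
  | cons r M0 ih =>
    have hr : r.im < 0 := hM r (Multiset.mem_cons_self r M0)
    obtain ⟨hp0, hratio0⟩ := ih (fun s hs => hM s (Multiset.mem_cons_of_mem hs))
    set P0 := (M0.map fun a => Polynomial.X - Polynomial.C a).prod with hP0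
    set p0 := Polynomial.eval 1 P0 with hp0def
    set d0 := Polynomial.eval 1 (Polynomial.derivative P0) with hd0def
    have ha : (1 - r : ℂ) ≠ 0 := by
      intro h
      have h2 : (1 - r : ℂ).im = 0 := by rw [h]; simp
      rw [Complex.sub_im, Complex.one_im] at h2
      linarith
    have haim : (0:ℝ) < (1 - r : ℂ).im := by
      rw [Complex.sub_im, Complex.one_im]; linarith
    have hmc : (Multiset.map (fun a => Polynomial.X - Polynomial.C a) (r ::ₘ M0)).prod
        = (Polynomial.X - Polynomial.C r) * P0 := by
      rw [Multiset.map_cons, Multiset.prod_cons]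
    rw [hmc]
    have hder : Polynomial.derivative ((Polynomial.X - Polynomial.C r) * P0)
        = P0 + (Polynomial.X - Polynomial.C r) * Polynomial.derivative P0 := by
      rw [Polynomial.derivative_mul, Polynomial.derivative_sub, Polynomial.derivative_X,
        Polynomial.derivative_C]
      ring
    have heval : Polynomial.eval 1 ((Polynomial.X - Polynomial.C r) * P0) = (1 - r) * p0 := by
      simp [hp0def]
    have hevald : Polynomial.eval 1 (Polynomial.derivative
        ((Polynomial.X - Polynomial.C r) * P0)) = p0 + (1 - r) * d0 := by
      rw [hder]; simp [hp0def, hd0def]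
    rw [heval, hevald]
    have hpne : (1 - r) * p0 ≠ 0 := mul_ne_zero ha hp0
    refine ⟨hpne, Or.inr ?_⟩
    have hratio : (p0 + (1 - r) * d0) / ((1 - r) * p0) = (1 - r)⁻¹ + d0 / p0 := by
      field_simp
    rw [hratio]
    have hinv : ((1 - r : ℂ)⁻¹).im < 0 := by
      rw [Complex.inv_im]
      have : 0 < Complex.normSq (1 - r) := Complex.normSq_pos.mpr ha
      exact div_neg_of_neg_of_pos (by linarith) this
    rcases hratio0 with h0 | h0
    · rw [Complex.add_im, h0]; simpa using hinv
    · rw [Complex.add_im]; linarith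

lemma one_sub_deriv_ne_zero (q : Polynomial ℂ)
    (hq : ∀ t : ℂ, 0 ≤ t.im → Polynomial.eval t q ≠ 0) :
    Polynomial.eval 1 q - Polynomial.eval 1 (Polynomial.derivative q) ≠ 0 := by
  have hqne : q ≠ 0 := by
    intro h
    exact hq 1 (by simp) (by simp [h])
  have hfact : q = Polynomial.C q.leadingCoeff *
      (q.roots.map fun a => Polynomial.X - Polynomial.C a).prod :=
    Polynomial.Splits.eq_prod_roots (IsAlgClosed.splits q)
  have hroots : ∀ r ∈ q.roots, r.im < 0 := by
    intro r hr
    by_contra hge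
    push_neg at hge
    exact hq r hge ((Polynomial.mem_roots hqne).1 hr)
  obtain ⟨hp, hratio⟩ := prod_ratio_aux q.roots hroots
  set P := (q.roots.map fun a => Polynomial.X - Polynomial.C a).prod with hP
  set p1 := Polynomial.eval 1 P with hp1
  set d1 := Polynomial.eval 1 (Polynomial.derivative P) with hd1
  have hlc : q.leadingCoeff ≠ 0 := Polynomial.leadingCoeff_ne_zero.mpr hqne
  have he1 : Polynomial.eval 1 q = q.leadingCoeff * p1 := by
    conv_lhs => rw [hfact]
    simp [hp1]
  have he2 : Polynomial.eval 1 (Polynomial.derivative q) = q.leadingCoeff * d1 := by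
    conv_lhs => rw [hfact, Polynomial.derivative_C_mul]
    simp [hd1]
  rw [he1, he2]
  intro hcontra
  have hpd : p1 = d1 := by
    have := sub_eq_zero.mp hcontra
    exact mul_left_cancel₀ hlc this
  rcases hratio with h0 | h0
  · rw [← hpd, div_self hp] at h0
    exact one_ne_zero h0
  · rw [← hpd, div_self hp] at h0
    simp at h0

/-- Main nonvanishing theorem. -/
theorem etaAux_ne_zero : ∀ (m : ℕ) (edge : Fin m → Finset (Fin n)) (A : Finset (Fin n))
    (x : Fin n → ℂ), (∀ j, 0 < (x j).im) → eval x (etaAux m edge A) ≠ 0 := by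
  intro m
  induction m with
  | zero =>
    intro edge A x hx
    simp only [etaAux, map_prod, eval_X]
    rw [Finset.prod_ne_zero_iff]
    intro j _ h0
    have := hx j
    rw [h0] at this
    simp at this
  | succ m ih =>
    intro edge A x hx
    set G := edge 0 ∩ A with hGdef
    set tl := fun i : Fin m => edge i.succ with htl
    set c : Finset (Fin n) → ℂ := fun S => eval x (etaAux m tl (A \ S)) with hc
    set q : Polynomial ℂ := ∑ S ∈ G.powerset, Polynomial.C (c S) * Polynomial.X ^ S.card
      with hqdef
    have hqe : ∀ t : ℂ, Polynomial.eval t q = ∑ S ∈ G.powerset, c S * t ^ S.card := by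
      intro t
      rw [hqdef, Polynomial.eval_finset_sum]
      exact Finset.sum_congr rfl fun S _ => by simp
    have hqne : ∀ t : ℂ, 0 ≤ t.im → Polynomial.eval t q ≠ 0 := by
      intro t ht
      rw [hqe t]
      have hshift := etaAux_shift m tl A G Finset.inter_subset_right x t
      have : ∑ S ∈ G.powerset, c S * t ^ S.card =
          eval (fun j => x j + if j ∈ G then t else 0) (etaAux m tl A) := by
        rw [← hshift]
        exact Finset.sum_congr rfl fun S _ => mul_comm _ _
      rw [this]
      apply ih
      intro j
      rw [Complex.add_im]
      by_cases hj : j ∈ G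
      · rw [if_pos hj]
        have := hx j
        linarith
      · rw [if_neg hj]
        simpa using hx j
    have hd : Polynomial.eval 1 (Polynomial.derivative q) =
        ∑ S ∈ G.powerset, c S * S.card := by
      rw [hqdef, Polynomial.derivative_sum, Polynomial.eval_finset_sum]
      refine Finset.sum_congr rfl fun S _ => ?_
      rw [Polynomial.derivative_C_mul, Polynomial.derivative_X_pow]
      simp
    have hv : eval x (etaAux (m + 1) edge A) =
        Polynomial.eval 1 q - Polynomial.eval 1 (Polynomial.derivative q) := by
      rw [hqe 1, hd, ← Finset.sum_sub_distrib]
      simp only [etaAux, map_sum, map_mul, eval_C]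
      refine Finset.sum_congr rfl fun S _ => ?_
      show (1 - (S.card : ℂ)) * c S = c S * 1 ^ S.card - c S * (S.card : ℂ)
      rw [one_pow]
      ring
    rw [hv]
    exact one_sub_deriv_ne_zero q hqne

lemma rmVerts_cons (S : Finset (Fin n)) (s' : Fin m → Finset (Fin n)) :
    rmVerts (Fin.cons S s') = S ∪ rmVerts s' := by
  ext i
  simp only [rmVerts, Finset.mem_filter, Finset.mem_univ, true_and, Finset.mem_union]
  rw [Fin.exists_fin_succ]
  simp [Fin.cons_zero, Fin.cons_succ]

lemma cond_cons_iff (edge : Fin (m + 1) → Finset (Fin n)) (A S : Finset (Fin n))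
    (s' : Fin m → Finset (Fin n)) (t : Fin (m + 1) → Finset (Fin n))
    (ht : t = Fin.cons S s') :
    ((∀ e : Fin (m + 1), t e ⊆ edge e ∩ A) ∧
        ∀ e f : Fin (m + 1), e ≠ f → Disjoint (t e) (t f)) ↔
      (S ⊆ edge 0 ∩ A ∧ ((∀ e : Fin m, s' e ⊆ (fun i => edge i.succ) e ∩ (A \ S)) ∧
        ∀ e f : Fin m, e ≠ f → Disjoint (s' e) (s' f))) := by
  subst ht
  constructor
  · rintro ⟨h1, h2⟩
    refine ⟨by simpa [Fin.cons_zero] using h1 0, fun e => ?_, fun e f hef => ?_⟩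
    · intro i hi
      have hie := h1 e.succ
      rw [Fin.cons_succ] at hie
      have hie2 := Finset.mem_inter.mp (hie hi)
      have hdisj : Disjoint (s' e) S := by
        have := h2 e.succ 0 (Fin.succ_ne_zero e)
        rwa [Fin.cons_succ, Fin.cons_zero] at this
      exact Finset.mem_inter.mpr ⟨hie2.1, Finset.mem_sdiff.mpr ⟨hie2.2,
        fun hiS => Finset.disjoint_left.mp hdisj hi hiS⟩⟩
    · have := h2 e.succ f.succ (fun h => hef (Fin.succ_injective m h))
      rwa [Fin.cons_succ, Fin.cons_succ] at this
  · rintro ⟨hS, h1', h2'⟩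
    constructor
    · intro e
      rcases Fin.eq_zero_or_eq_succ e with rfl | ⟨e', rfl⟩
      · rw [Fin.cons_zero]; exact hS
      · rw [Fin.cons_succ]
        intro i hi
        have := Finset.mem_inter.mp (h1' e' hi)
        exact Finset.mem_inter.mpr ⟨this.1, (Finset.mem_sdiff.mp this.2).1⟩
    · intro e f hef
      rcases Fin.eq_zero_or_eq_succ e with rfl | ⟨e', rfl⟩ <;>
        rcases Fin.eq_zero_or_eq_succ f with rfl | ⟨f', rfl⟩
      · exact absurd rfl hef
      · rw [Fin.cons_zero, Fin.cons_succ]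
        exact Finset.disjoint_left.mpr fun i hiS hif =>
          (Finset.mem_sdiff.mp (Finset.mem_inter.mp (h1' f' hif)).2).2 hiS
      · rw [Fin.cons_zero, Fin.cons_succ]
        exact Finset.disjoint_right.mpr fun i hiS hif =>
          (Finset.mem_sdiff.mp (Finset.mem_inter.mp (h1' e' hif)).2).2 hiS
      · rw [Fin.cons_succ, Fin.cons_succ]
        exact h2' e' f' fun h => hef (by rw [h])

lemma etaAux_eq_sum : ∀ (m : ℕ) (edge : Fin m → Finset (Fin n)) (A : Finset (Fin n)),
    etaAux m edge A =
      ∑ s ∈ Finset.univ.filter (fun s : Fin m → Finset (Fin n) =>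
          (∀ e, s e ⊆ edge e ∩ A) ∧ ∀ e f, e ≠ f → Disjoint (s e) (s f)),
        (∏ e, C (1 - ((s e).card : ℂ))) * ∏ i ∈ A \ rmVerts s, X i := by
  intro m
  induction m with
  | zero =>
    intro edge A
    rw [Finset.univ_unique, Finset.filter_singleton,
      if_pos ⟨fun e => e.elim0, fun e _ _ => e.elim0⟩, Finset.sum_singleton]
    simp [etaAux, rmVerts]
  | succ m ih =>
    intro edge A
    show (∑ S ∈ (edge 0 ∩ A).powerset,
        C (1 - (S.card : ℂ)) * etaAux m (fun i => edge i.succ) (A \ S)) = _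
    have step1 : ∀ S ∈ (edge 0 ∩ A).powerset,
        C (1 - (S.card : ℂ)) * etaAux m (fun i => edge i.succ) (A \ S) =
        ∑ s' ∈ Finset.univ.filter (fun s' : Fin m → Finset (Fin n) =>
            (∀ e, s' e ⊆ (fun i => edge i.succ) e ∩ (A \ S)) ∧
              ∀ e f, e ≠ f → Disjoint (s' e) (s' f)),
          C (1 - (S.card : ℂ)) *
            ((∏ e, C (1 - ((s' e).card : ℂ))) * ∏ i ∈ (A \ S) \ rmVerts s', X i) := by
      intro S _
      rw [ih (fun i => edge i.succ) (A \ S), Finset.mul_sum]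
    rw [Finset.sum_congr rfl step1, Finset.sum_sigma']
    refine Finset.sum_bij' (fun p _ => Fin.cons p.1 p.2)
      (fun s _ => ⟨s 0, fun e => s e.succ⟩) ?_ ?_ ?_ ?_ ?_
    · rintro ⟨S, s'⟩ hp
      rw [Finset.mem_sigma, Finset.mem_powerset, Finset.mem_filter] at hp
      rw [Finset.mem_filter]
      exact ⟨Finset.mem_univ _, (cond_cons_iff edge A S s' _ rfl).mpr ⟨hp.1, hp.2.2⟩⟩
    · intro s hs
      rw [Finset.mem_filter] at hs
      rw [Finset.mem_sigma, Finset.mem_powerset, Finset.mem_filter]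
      have hc : s = Fin.cons (s 0) (fun e => s e.succ) := by
        funext e
        rcases Fin.eq_zero_or_eq_succ e with rfl | ⟨e', rfl⟩
        · rw [Fin.cons_zero]
        · rw [Fin.cons_succ]
      have := (cond_cons_iff edge A (s 0) (fun e => s e.succ) _ hc).mp hs.2
      exact ⟨this.1, Finset.mem_univ _, this.2⟩
    · rintro ⟨S, s'⟩ _
      refine Sigma.ext ?_ ?_ <;> simp [Fin.cons_zero, Fin.cons_succ]
    · intro s _
      funext e
      rcases Fin.eq_zero_or_eq_succ e with rfl | ⟨e', rfl⟩
      · simp only [Fin.cons_zero]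
      · simp only [Fin.cons_succ]
    · rintro ⟨S, s'⟩ _
      have hsd : (A \ S) \ rmVerts s' = A \ (S ∪ rmVerts s') := by
        ext i
        simp only [Finset.mem_sdiff, Finset.mem_union]
        tauto
      simp only [rmVerts_cons, Fin.prod_univ_succ, Fin.cons_zero, Fin.cons_succ, hsd]
      ring

lemma rmWeight_eq (s : Fin m → Finset (Fin n)) (hs : ∀ e, s e = ∅ ∨ 1 < (s e).card) :
    (rmWeight s : ℂ) = ∏ e ∈ Finset.univ.filter (fun e => s e ≠ ∅), (((s e).card : ℂ) - 1) := by
  have hcard : ∀ e, s e ≠ ∅ → 2 ≤ (s e).card ∧ (s e).card ≤ n := by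
    intro e he
    refine ⟨?_, ?_⟩
    · rcases hs e with h | h
      · exact absurd h he
      · omega
    · have := Finset.card_le_univ (s e)
      simpa using this
  have hNat : rmWeight s =
      ∏ e ∈ Finset.univ.filter (fun e => s e ≠ ∅), ((s e).card - 1) := by
    rw [rmWeight]
    rw [← Finset.prod_fiberwise_of_maps_to (g := fun e => (s e).card - 1)
      (t := Finset.Icc 1 (n - 1)) ?_ (fun e => (s e).card - 1)]
    · refine Finset.prod_congr rfl fun k hk => ?_
      rw [Finset.mem_Icc] at hk
      have hfib : (Finset.univ.filter (fun e => s e ≠ ∅)).filter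
          (fun e => (s e).card - 1 = k) =
          Finset.univ.filter (fun e : Fin m => (s e).card = k + 1) := by
        ext e
        simp only [Finset.mem_filter, Finset.mem_univ, true_and]
        constructor
        · rintro ⟨he, hck⟩
          have := (hcard e he).1
          omega
        · intro hck
          have hne : s e ≠ ∅ := by
            intro h0
            rw [h0] at hck
            simp at hck
          exact ⟨hne, by omega⟩
      rw [hfib]
      have : ∀ e ∈ Finset.univ.filter (fun e : Fin m => (s e).card = k + 1),
          (s e).card - 1 = k := by
        intro e he
        have := (Finset.mem_filter.mp he).2
        omega
      rw [Finset.prod_congr rfl this, Finset.prod_const, rmCount]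
    · intro e he
      rw [Finset.mem_filter] at he
      obtain ⟨h2, hn⟩ := hcard e he.2
      show (s e).card - 1 ∈ Finset.Icc 1 (n - 1)
      rw [Finset.mem_Icc]
      omega
  rw [hNat, Nat.cast_prod]
  refine Finset.prod_congr rfl fun e he => ?_
  rw [Finset.mem_filter] at he
  have h1 : 1 ≤ (s e).card := by have := (hcard e he.2).1; omega
  rw [Nat.cast_sub h1, Nat.cast_one]

lemma relaxedMatchPoly_eq_etaAux (edge : Fin m → Finset (Fin n)) :
    relaxedMatchPoly edge = etaAux m edge Finset.univ := by
  rw [etaAux_eq_sum]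
  rw [relaxedMatchPoly]
  have hsub : Finset.univ.filter (fun s : Fin m → Finset (Fin n) =>
      IsRelaxedMatching edge s) ⊆ Finset.univ.filter (fun s =>
      (∀ e, s e ⊆ edge e ∩ Finset.univ) ∧ ∀ e f, e ≠ f → Disjoint (s e) (s f)) := by
    intro s hs
    rw [Finset.mem_filter] at hs ⊢
    obtain ⟨_, h1, h2⟩ := hs
    exact ⟨Finset.mem_univ _, fun e => by
      rw [Finset.inter_univ]; exact (h1 e).1, h2⟩
  rw [← Finset.sum_subset hsub]
  · refine Finset.sum_congr rfl fun s hs => ?_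
    rw [Finset.mem_filter] at hs
    obtain ⟨_, h1, h2⟩ := hs
    have hW := rmWeight_eq s (fun e => (h1 e).2)
    have hprod : (∏ e, C (1 - ((s e).card : ℂ)) : MvPolynomial (Fin n) ℂ) =
        (-1 : MvPolynomial (Fin n) ℂ) ^ rmSize s * C ((rmWeight s : ℂ)) := by
      rw [← Finset.prod_filter_mul_prod_filter_not Finset.univ (fun e => s e ≠ ∅)
        (fun e => C (1 - ((s e).card : ℂ)))]
      have hun : (∏ e ∈ Finset.univ.filter (fun e => ¬s e ≠ ∅),
          C (1 - ((s e).card : ℂ)) : MvPolynomial (Fin n) ℂ) = 1 := by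
        refine Finset.prod_eq_one fun e he => ?_
        rw [Finset.mem_filter] at he
        have : s e = ∅ := not_not.mp he.2
        rw [this]
        simp
      rw [hun, mul_one]
      have hneg : ∀ e ∈ Finset.univ.filter (fun e => s e ≠ ∅),
          (C (1 - ((s e).card : ℂ)) : MvPolynomial (Fin n) ℂ) =
            (-1) * C (((s e).card : ℂ) - 1) := by
        intro e _
        rw [neg_one_mul, ← C_neg, neg_sub]
      rw [Finset.prod_congr rfl hneg, Finset.prod_mul_distrib, Finset.prod_const,
        ← map_prod, ← hW, rmSize]
    rw [hprod, rmVerts]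
  · intro s hsP hsNot
    rw [Finset.mem_filter] at hsP hsNot
    push_neg at hsNot
    have hbad := hsNot (Finset.mem_univ s)
    rw [IsRelaxedMatching] at hbad
    have hbad1 : ¬∀ e, s e ⊆ edge e ∧ (s e = ∅ ∨ 1 < (s e).card) := by
      intro hA
      exact hbad ⟨hA, hsP.2.2⟩
    push_neg at hbad1
    obtain ⟨e, he⟩ := hbad1
    have hsub2 : s e ⊆ edge e := by
      have := hsP.2.1 e
      rwa [Finset.inter_univ] at this
    have hcard := he hsub2
    obtain ⟨hne, hle⟩ := hcard
    have hc1 : (s e).card = 1 := by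
      have : (s e).card ≠ 0 := fun h0 => hne.ne_empty (Finset.card_eq_zero.mp h0)
      omega
    have hzero : (∏ f, C (1 - ((s f).card : ℂ)) : MvPolynomial (Fin n) ℂ) = 0 := by
      apply Finset.prod_eq_zero (Finset.mem_univ e)
      rw [hc1]
      simp
    rw [hzero, zero_mul]

lemma relaxedMatchPoly_eval_ne_zero (edge : Fin m → Finset (Fin n))
    (x : Fin n → ℂ) (hx : ∀ i, 0 < (x i).im) :
    MvPolynomial.eval x (relaxedMatchPoly edge) ≠ 0 := by
  rw [relaxedMatchPoly_eq_etaAux]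
  exact etaAux_ne_zero m edge Finset.univ x hx

lemma uni_bridge (edge : Fin m → Finset (Fin n)) (w : ℂ) :
    Polynomial.eval w ((relaxedMatchPolyUni edge).map (algebraMap ℝ ℂ)) =
      MvPolynomial.eval (fun _ => w) (relaxedMatchPoly edge) := by
  rw [relaxedMatchPolyUni, relaxedMatchPoly, Polynomial.map_sum, Polynomial.eval_finset_sum,
    map_sum]
  refine Finset.sum_congr rfl fun s hs => ?_
  rw [Finset.mem_filter] at hs
  have hcard : (Finset.univ \ rmVerts s).card = n - (rmVerts s).card := by
    rw [Finset.card_sdiff_of_subset (Finset.subset_univ _), Finset.card_univ, Fintype.card_fin]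
  rw [Polynomial.smul_eq_C_mul]
  simp only [Polynomial.map_mul, Polynomial.map_C, Polynomial.map_pow, Polynomial.map_X,
    Polynomial.eval_mul, Polynomial.eval_C, Polynomial.eval_pow, Polynomial.eval_X,
    map_mul, map_pow, map_neg, map_one, eval_C, eval_X, map_prod, Finset.prod_const,
    hcard, map_natCast, Polynomial.map_neg, Polynomial.map_one, Polynomial.eval_neg,
    Polynomial.eval_one, Polynomial.map_natCast, Polynomial.eval_natCast]
  try ring

lemma conj_eval_map (p : Polynomial ℝ) (w : ℂ) :
    Polynomial.eval ((starRingEnd ℂ) w) (p.map (algebraMap ℝ ℂ)) =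
      (starRingEnd ℂ) (Polynomial.eval w (p.map (algebraMap ℝ ℂ))) := by
  induction p using Polynomial.induction_on with
  | C a => simp [Complex.conj_ofReal]
  | add p q hp hq => simp [hp, hq]
  | monomial a k ih =>
    simp only [Polynomial.map_mul, Polynomial.map_C, Polynomial.map_pow, Polynomial.map_X,
      Polynomial.eval_mul, Polynomial.eval_C, Polynomial.eval_pow, Polynomial.eval_X,
      map_mul, map_pow]
    simp [Complex.conj_ofReal]

/-- The multivariate relaxed matching polynomial of a hypergraph is stable, and in
particular the univariate relaxed matching polynomial is real-rooted. -/
theorem stmt_18 (edge : Fin m → Finset (Fin n)) :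
    IsStable (relaxedMatchPoly edge) ∧
    ∀ z : ℂ, ((relaxedMatchPolyUni edge).map (algebraMap ℝ ℂ)).IsRoot z → z.im = 0 := by
  constructor
  · exact Or.inr fun x hx => relaxedMatchPoly_eval_ne_zero edge x hx
  · intro z hz
    rw [Polynomial.IsRoot] at hz
    by_contra him
    rcases lt_or_gt_of_ne him with hlt | hgt
    · -- z.im < 0, use the conjugate
      have hconj := conj_eval_map (relaxedMatchPolyUni edge) z
      rw [hz, map_zero] at hconj
      have hzc : ∀ i : Fin n, 0 < ((fun _ => (starRingEnd ℂ) z) i).im := by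
        intro i
        rw [Complex.conj_im]
        linarith
      have := relaxedMatchPoly_eval_ne_zero edge (fun _ => (starRingEnd ℂ) z) hzc
      rw [← uni_bridge edge ((starRingEnd ℂ) z)] at this
      exact this hconj
    · have hzc : ∀ i : Fin n, 0 < ((fun _ => z) i).im := fun i => hgt
      have := relaxedMatchPoly_eval_ne_zero edge (fun _ => z) hzc
      rw [← uni_bridge edge z] at this
      exact this hz
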